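/- (Corollary 2, even posterior moments for β = 0.) Let n ≥ 1 be an integer, let α > 0, γ, δ be real numbers with n > γ + δ − 2α + 1, let r ∈ (−1,1), and let k ≥ 0 be an even integer. Then ∫_{−1}^{1} ρ^k (1−ρ²)^{(2α+n−γ−δ−3)/2} ₂F₁((n−γ−1)/2, (n−δ−1)/2; 1/2; r²ρ²) dρ = B( (k+1)/2, α + (n−γ−δ−1)/2 ) · ₃F₂( (k+1)/2, (n−γ−1)/2, (n−δ−1)/2; 1/2, (k+2α+n−γ−δ)/2; r² ). -/

import Mathlib

open MeasureTheory Real Set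

/-- Pochhammer symbol (rising factorial) `(x)_m`. -/
noncomputable def poch (x : ℝ) (m : ℕ) : ℝ := (ascPochhammer ℝ m).eval x

/-- Confluent hypergeometric function `₁F₁(a; c; z)`. -/
noncomputable def oneF1 (a c z : ℝ) : ℝ :=
  ∑' m : ℕ, poch a m / (poch c m * (m.factorial : ℝ)) * z ^ m

/-- Gauss hypergeometric function `₂F₁(a, b; c; z)`. -/
noncomputable def twoF1 (a b c z : ℝ) : ℝ :=
  ∑' m : ℕ, poch a m * poch b m / (poch c m * (m.factorial : ℝ)) * z ^ m

/-- Generalized hypergeometric function `₃F₂(a₁, a₂, a₃; b₁, b₂; z)`. -/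
noncomputable def threeF2 (a₁ a₂ a₃ b₁ b₂ z : ℝ) : ℝ :=
  ∑' m : ℕ, poch a₁ m * poch a₂ m * poch a₃ m /
      (poch b₁ m * poch b₂ m * (m.factorial : ℝ)) * z ^ m

/-- Beta function `B(u,v) = Γ(u)Γ(v)/Γ(u+v)`. -/
noncomputable def betaFn (u v : ℝ) : ℝ := Real.Gamma u * Real.Gamma v / Real.Gamma (u + v)

/-- `W_{γ,δ}(n)`, the ratio of Gamma functions from the paper. -/
noncomputable def Wgd (γ δ : ℝ) (n : ℕ) : ℝ :=
  (Real.Gamma (((n : ℝ) - γ) / 2) * Real.Gamma (((n : ℝ) - δ) / 2)) /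
    (Real.Gamma (((n : ℝ) - γ - 1) / 2) * Real.Gamma (((n : ℝ) - δ - 1) / 2))

lemma poch_succ (x : ℝ) (m : ℕ) : poch x (m+1) = poch x m * (x + m) := by
  simp [poch, ascPochhammer_succ_right, Polynomial.eval_mul]

lemma poch_pos {x : ℝ} (hx : 0 < x) (m : ℕ) : 0 < poch x m := ascPochhammer_pos m x hx

lemma poch_nonneg {x : ℝ} (hx : 0 ≤ x) (m : ℕ) : 0 ≤ poch x m := by
  induction m with
  | zero => simp [poch]
  | succ m ih => rw [poch_succ]; positivity

lemma abs_poch_le {a b : ℝ} (hb : |a| ≤ b) (m : ℕ) : |poch a m| ≤ poch b m := by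
  have hb0 : 0 ≤ b := le_trans (abs_nonneg a) hb
  induction m with
  | zero => simp [poch]
  | succ m ih =>
    rw [poch_succ, poch_succ, abs_mul]
    refine mul_le_mul ih ?_ (abs_nonneg _) (poch_nonneg hb0 m)
    calc |a + (m:ℝ)| ≤ |a| + m := by simpa using abs_add_le a m
    _ ≤ b + m := by linarith

lemma poch_le_poch {x y : ℝ} (hx : 0 ≤ x) (hxy : x ≤ y) (m : ℕ) : poch x m ≤ poch y m := by
  induction m with
  | zero => simp [poch]
  | succ m ih =>
    rw [poch_succ, poch_succ]
    exact mul_le_mul ih (by linarith) (by positivity) (poch_nonneg (by linarith) m)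

lemma Gamma_add_nat' {x : ℝ} (hx : 0 < x) (m : ℕ) :
    Real.Gamma (x + m) = poch x m * Real.Gamma x := by
  induction m with
  | zero => simp [poch]
  | succ m ih =>
    have hxm : (0:ℝ) < x + m := by positivity
    have h : x + ((m:ℕ)+1:ℕ) = (x + m) + 1 := by push_cast; ring
    rw [h, Real.Gamma_add_one (ne_of_gt hxm), ih, poch_succ]
    ring

lemma betaFn_pos {u v : ℝ} (hu : 0 < u) (hv : 0 < v) : 0 < betaFn u v := by
  unfold betaFn
  have := Real.Gamma_pos_of_pos hu
  have := Real.Gamma_pos_of_pos hv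
  have := Real.Gamma_pos_of_pos (by linarith : 0 < u + v)
  positivity

lemma betaFn_add_nat {s q : ℝ} (hs : 0 < s) (hq : 0 < q) (m : ℕ) :
    betaFn (s + m) q = betaFn s q * poch s m / poch (s + q) m := by
  unfold betaFn
  have h2 : s + m + q = (s + q) + m := by ring
  rw [Gamma_add_nat' hs m, h2, Gamma_add_nat' (by linarith) m]
  have g1 := Real.Gamma_pos_of_pos hs
  have g2 := Real.Gamma_pos_of_pos hq
  have g3 := Real.Gamma_pos_of_pos (by linarith : 0 < s + q)
  have p1 := poch_pos (by linarith : 0 < s + q) m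
  field_simp

lemma complex_real_integrand (u v : ℝ) {x : ℝ} (hx0 : 0 ≤ x) (hx1 : x ≤ 1) :
    ((x ^ (u - 1) * (1 - x) ^ (v - 1) : ℝ) : ℂ) =
      (x : ℂ) ^ ((u : ℂ) - 1) * ((1 : ℂ) - x) ^ ((v : ℂ) - 1) := by
  push_cast
  rw [Complex.ofReal_cpow hx0, Complex.ofReal_cpow (by linarith : (0:ℝ) ≤ 1 - x)]
  push_cast
  ring_nf

lemma realBeta_intervalIntegral {u v : ℝ} (hu : 0 < u) (hv : 0 < v) :
    ∫ x in (0:ℝ)..1, x ^ (u - 1) * (1 - x) ^ (v - 1) = betaFn u v := by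
  have h := Complex.Gamma_mul_Gamma_eq_betaIntegral (s := u) (t := v)
    (by simpa using hu) (by simpa using hv)
  have hbi : Complex.betaIntegral u v =
      ((∫ x in (0:ℝ)..1, x ^ (u - 1) * (1 - x) ^ (v - 1) : ℝ) : ℂ) := by
    rw [Complex.betaIntegral, ← intervalIntegral.integral_ofReal]
    apply intervalIntegral.integral_congr
    intro x hx
    rw [Set.uIcc_of_le (by norm_num : (0:ℝ) ≤ 1)] at hx
    exact (complex_real_integrand u v hx.1 hx.2).symm
  rw [hbi] at h
  have huv : Real.Gamma (u + v) ≠ 0 := (Real.Gamma_pos_of_pos (by linarith)).ne'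
  have h2 : Real.Gamma u * Real.Gamma v =
      Real.Gamma (u + v) * ∫ x in (0:ℝ)..1, x ^ (u - 1) * (1 - x) ^ (v - 1) := by
    have := h
    rw [Complex.Gamma_ofReal, Complex.Gamma_ofReal, ← Complex.ofReal_add,
      Complex.Gamma_ofReal, ← Complex.ofReal_mul, ← Complex.ofReal_mul] at this
    exact_mod_cast this
  unfold betaFn
  field_simp
  linarith [h2]

lemma realBeta_integrableOn {u v : ℝ} (hu : 0 < u) (hv : 0 < v) :
    IntegrableOn (fun x : ℝ => x ^ (u - 1) * (1 - x) ^ (v - 1)) (Ioo 0 1) := by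
  have h := (Complex.betaIntegral_convergent (u := u) (v := v)
    (by simpa using hu) (by simpa using hv)).1
  have h2 : IntegrableOn (fun x : ℝ =>
      ((x : ℂ) ^ ((u : ℂ) - 1) * ((1 : ℂ) - x) ^ ((v : ℂ) - 1)).re) (Ioc 0 1) := h.re
  refine ((h2.mono_set Ioo_subset_Ioc_self).congr_fun ?_ measurableSet_Ioo)
  intro x hx
  rw [show (fun x : ℝ => x ^ (u - 1) * (1 - x) ^ (v - 1)) x = x ^ (u - 1) * (1 - x) ^ (v - 1) from rfl,
    ← Complex.ofReal_re (x ^ (u - 1) * (1 - x) ^ (v - 1)), complex_real_integrand u v hx.1.le hx.2.le]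

lemma sq_image_Ioo : (fun x : ℝ => x ^ 2) '' Ioo 0 1 = Ioo (0:ℝ) 1 := by
  ext t
  constructor
  · rintro ⟨x, hx, rfl⟩
    refine ⟨pow_pos hx.1 2, ?_⟩
    show x ^ 2 < 1
    nlinarith [hx.1, hx.2]
  · rintro ⟨ht0, ht1⟩
    exact ⟨Real.sqrt t, ⟨Real.sqrt_pos.mpr ht0, by
      rw [show (1:ℝ) = Real.sqrt 1 by simp]; exact Real.sqrt_lt_sqrt ht0.le ht1⟩,
      Real.sq_sqrt ht0.le⟩

lemma sq_hasDeriv : ∀ x ∈ Ioo (0:ℝ) 1, HasDerivWithinAt (fun x : ℝ => x ^ 2) (2 * x) (Ioo 0 1) x := by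
  intro x _
  simpa using (hasDerivAt_pow 2 x).hasDerivWithinAt

lemma sq_injOn : InjOn (fun x : ℝ => x ^ 2) (Ioo 0 1) := by
  intro a ha b hb h
  simp only at h
  nlinarith [ha.1, hb.1]

-- key change of variables
lemma cov (g : ℝ → ℝ) :
    ∫ t in Ioo (0:ℝ) 1, g t = ∫ x in Ioo (0:ℝ) 1, |2 * x| • g (x ^ 2) := by
  conv_lhs => rw [← sq_image_Ioo]
  exact integral_image_eq_integral_abs_deriv_smul measurableSet_Ioo sq_hasDeriv sq_injOn g

lemma cov_int (g : ℝ → ℝ) :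
    IntegrableOn g (Ioo (0:ℝ) 1) ↔ IntegrableOn (fun x => |2 * x| • g (x ^ 2)) (Ioo (0:ℝ) 1) := by
  conv_lhs => rw [← sq_image_Ioo]
  exact integrableOn_image_iff_integrableOn_abs_deriv_smul measurableSet_Ioo sq_hasDeriv sq_injOn g

lemma integrand_eq (j : ℕ) (p : ℝ) {x : ℝ} (hx : x ∈ Ioo (0:ℝ) 1) :
    |2 * x| • ((x ^ 2) ^ (((j:ℝ) + 1) / 2 - 1) * (1 - x ^ 2) ^ (p + 1 - 1)) =
      2 * (x ^ j * (1 - x ^ 2) ^ p) := by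
  obtain ⟨hx0, _⟩ := hx
  rw [smul_eq_mul, abs_of_pos (by linarith), add_sub_cancel_right]
  have h1 : (x ^ 2) ^ (((j:ℝ) + 1) / 2 - 1) = x ^ ((j:ℝ) - 1) := by
    rw [← Real.rpow_natCast x 2, ← Real.rpow_mul hx0.le]
    congr 1
    push_cast; ring
  rw [h1]
  have h3 : (x : ℝ) ^ j = x * x ^ ((j:ℝ) - 1) := by
    rw [← Real.rpow_natCast x j]
    conv_lhs => rw [show ((j:ℕ):ℝ) = 1 + ((j:ℝ) - 1) by push_cast; ring]
    rw [Real.rpow_add hx0, Real.rpow_one]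
  rw [h3]; ring

lemma moment01_int (j : ℕ) {p : ℝ} (hp : -1 < p) :
    IntegrableOn (fun ρ : ℝ => ρ ^ j * (1 - ρ ^ 2) ^ p) (Ioo 0 1) := by
  have hu : (0:ℝ) < ((j:ℝ) + 1) / 2 := by positivity
  have hv : (0:ℝ) < p + 1 := by linarith
  set g : ℝ → ℝ := fun t => t ^ (((j:ℝ) + 1) / 2 - 1) * (1 - t) ^ (p + 1 - 1) with hg
  have hbase : IntegrableOn g (Ioo 0 1) := realBeta_integrableOn hu hv
  have h2 : IntegrableOn (fun x : ℝ => 2 * (x ^ j * (1 - x ^ 2) ^ p)) (Ioo 0 1) :=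
    ((cov_int g).mp hbase).congr_fun (fun x hx => integrand_eq j p hx) measurableSet_Ioo
  have h3 : IntegrableOn (fun x : ℝ => (1/2 : ℝ) * (2 * (x ^ j * (1 - x ^ 2) ^ p))) (Ioo 0 1) :=
    h2.const_mul (1/2 : ℝ)
  exact h3.congr_fun (fun x _ => by ring) measurableSet_Ioo

lemma moment01_val (j : ℕ) {p : ℝ} (hp : -1 < p) :
    ∫ ρ in Ioo (0:ℝ) 1, ρ ^ j * (1 - ρ ^ 2) ^ p = betaFn (((j:ℝ) + 1) / 2) (p + 1) / 2 := by
  have hu : (0:ℝ) < ((j:ℝ) + 1) / 2 := by positivity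
  have hv : (0:ℝ) < p + 1 := by linarith
  set g : ℝ → ℝ := fun t => t ^ (((j:ℝ) + 1) / 2 - 1) * (1 - t) ^ (p + 1 - 1) with hg
  have hcov := cov g
  have hcongr : ∫ x in Ioo (0:ℝ) 1, |2 * x| • g (x ^ 2) =
      ∫ x in Ioo (0:ℝ) 1, 2 * (x ^ j * (1 - x ^ 2) ^ p) :=
    setIntegral_congr_fun measurableSet_Ioo (fun x hx => integrand_eq j p hx)
  have hval : ∫ t in Ioo (0:ℝ) 1, g t = betaFn (((j:ℝ) + 1) / 2) (p + 1) := by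
    rw [← MeasureTheory.integral_Ioc_eq_integral_Ioo,
      ← intervalIntegral.integral_of_le (by norm_num : (0:ℝ) ≤ 1)]
    exact realBeta_intervalIntegral hu hv
  rw [hval, hcongr, MeasureTheory.integral_const_mul] at hcov
  linarith

lemma moment_even_int {j : ℕ} (hj : Even j) {p : ℝ} (hp : -1 < p) :
    IntegrableOn (fun ρ : ℝ => ρ ^ j * (1 - ρ ^ 2) ^ p) (Ioo (-1:ℝ) 1) := by
  have h01 : IntegrableOn (fun ρ : ℝ => ρ ^ j * (1 - ρ ^ 2) ^ p) (Ioo 0 1) := moment01_int j hp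
  have hneg : IntegrableOn (fun ρ : ℝ => ρ ^ j * (1 - ρ ^ 2) ^ p) (Ioo (-1) 0) := by
    have himg : (fun x : ℝ => -x) '' Ioo 0 1 = Ioo (-1:ℝ) 0 := by
      ext t
      constructor
      · rintro ⟨x, hx, rfl⟩
        exact ⟨show (-1:ℝ) < -x by linarith [hx.2], show -x < (0:ℝ) by linarith [hx.1]⟩
      · rintro ⟨h1, h2⟩; exact ⟨-t, ⟨by linarith, by linarith⟩, by ring⟩
    have := (integrableOn_image_iff_integrableOn_abs_deriv_smul (s := Ioo (0:ℝ) 1)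
      (f := fun x : ℝ => -x) (f' := fun _ => (-1:ℝ))
      measurableSet_Ioo (fun x _ => (hasDerivAt_neg x).hasDerivWithinAt)
      (fun a _ b _ h => by simpa using neg_injective h)
      (fun ρ : ℝ => ρ ^ j * (1 - ρ ^ 2) ^ p))
    rw [himg] at this
    rw [this]
    refine h01.congr_fun (fun x _ => ?_) measurableSet_Ioo
    simp [hj.neg_pow]
  have : IntegrableOn (fun ρ : ℝ => ρ ^ j * (1 - ρ ^ 2) ^ p) (Ioc (-1) 0 ∪ Ioc 0 1) := by
    refine IntegrableOn.union ?_ ?_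
    · exact (integrableOn_Ioc_iff_integrableOn_Ioo).mpr hneg
    · exact (integrableOn_Ioc_iff_integrableOn_Ioo).mpr h01
  refine this.mono_set ?_
  intro x hx
  rcases le_or_gt x 0 with h | h
  · exact Or.inl ⟨hx.1, h⟩
  · exact Or.inr ⟨h, hx.2.le⟩

lemma moment_even_val {j : ℕ} (hj : Even j) {p : ℝ} (hp : -1 < p) :
    ∫ ρ in Ioo (-1:ℝ) 1, ρ ^ j * (1 - ρ ^ 2) ^ p = betaFn (((j:ℝ) + 1) / 2) (p + 1) := by
  set f : ℝ → ℝ := fun ρ => ρ ^ j * (1 - ρ ^ 2) ^ p with hf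
  have hint := moment_even_int hj hp
  have h1 : IntervalIntegrable f volume (-1) 0 := by
    rw [intervalIntegrable_iff_integrableOn_Ioc_of_le (by norm_num)]
    exact hint.mono_set (fun x hx => ⟨hx.1, lt_of_le_of_lt hx.2 one_pos⟩)
  have h2 : IntervalIntegrable f volume 0 1 := by
    rw [intervalIntegrable_iff_integrableOn_Ioo_of_le (by norm_num)]
    exact hint.mono_set (fun x hx => ⟨by linarith [hx.1], hx.2⟩)
  have hsplit := intervalIntegral.integral_add_adjacent_intervals h1 h2
  have hneg : ∫ x in (-1:ℝ)..0, f x = ∫ x in (0:ℝ)..1, f x := by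
    have hc := intervalIntegral.integral_comp_neg (a := (0:ℝ)) (b := 1) f
    rw [neg_zero] at hc
    rw [← hc]
    apply intervalIntegral.integral_congr
    intro x _
    show f (-x) = f x
    simp only [hf]
    rw [hj.neg_pow, neg_pow, Even.neg_one_pow (by decide : Even 2), one_mul]
  have h01 : ∫ x in (0:ℝ)..1, f x = betaFn (((j:ℝ) + 1) / 2) (p + 1) / 2 := by
    rw [intervalIntegral.integral_of_le (by norm_num : (0:ℝ) ≤ 1),
      MeasureTheory.integral_Ioc_eq_integral_Ioo]
    exact moment01_val j hp
  have : ∫ ρ in Ioo (-1:ℝ) 1, f ρ = ∫ x in (-1:ℝ)..1, f x := by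
    rw [intervalIntegral.integral_of_le (by norm_num : (-1:ℝ) ≤ 1),
      MeasureTheory.integral_Ioc_eq_integral_Ioo]
  rw [this, ← hsplit, hneg, h01]
  ring

lemma tendsto_ratio (c : ℝ) :
    Filter.Tendsto (fun m : ℕ => (c + m) / (1 + m)) Filter.atTop (nhds 1) := by
  have h0 : Filter.Tendsto (fun m : ℕ => 1 / ((m:ℝ) + 1)) Filter.atTop (nhds 0) :=
    tendsto_one_div_add_atTop_nhds_zero_nat
  have h1 := (h0.const_mul (c - 1)).const_add 1
  rw [mul_zero, add_zero] at h1
  refine h1.congr (fun m => ?_)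
  have hm : (1:ℝ) + m ≠ 0 := by positivity
  field_simp
  ring

lemma summable_hyp {A B t : ℝ} (hA : 0 < A) (hB : 0 < B) (ht0 : 0 ≤ t) (ht1 : t < 1) :
    Summable (fun m : ℕ => poch A m * poch B m / (poch (1/2 : ℝ) m * m.factorial) * t ^ m) := by
  rcases eq_or_lt_of_le ht0 with rfl | ht
  · apply summable_of_ne_finset_zero (s := {0})
    intro m hm
    simp only [Finset.mem_singleton] at hm
    simp [zero_pow hm]
  set f : ℕ → ℝ := fun m => poch A m * poch B m / (poch (1/2 : ℝ) m * m.factorial) * t ^ m with hf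
  have hfpos : ∀ m, 0 < f m := by
    intro m
    have h1 := poch_pos hA m
    have h2 := poch_pos hB m
    have h3 := poch_pos (by norm_num : (0:ℝ) < 1/2) m
    have h4 : (0:ℝ) < m.factorial := by positivity
    have h5 : (0:ℝ) < t ^ m := pow_pos ht m
    exact mul_pos (div_pos (mul_pos h1 h2) (mul_pos h3 h4)) h5
  apply summable_of_ratio_test_tendsto_lt_one ht1
    (Filter.Eventually.of_forall fun m => (hfpos m).ne')
  have key : ∀ m : ℕ, ‖f (m+1)‖ / ‖f m‖ =
      t * ((A + m) / (1 + m)) * ((B + m) / (1 + m)) * ((1 + m) / (1/2 + m)) := by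
    intro m
    rw [Real.norm_eq_abs, Real.norm_eq_abs, abs_of_pos (hfpos (m+1)), abs_of_pos (hfpos m)]
    have h1 : f (m+1) = f m * (t * ((A + m) / (1 + m)) * ((B + m) / (1 + m)) *
        ((1 + m) / (1/2 + m))) := by
      have h3 := (poch_pos (by norm_num : (0:ℝ) < 1/2) m).ne'
      have h4 : ((m.factorial : ℝ)) ≠ 0 := by positivity
      have h5 : (1:ℝ) + m ≠ 0 := by positivity
      have h6 : (1:ℝ)/2 + m ≠ 0 := by positivity
      simp only [hf, poch_succ, Nat.factorial_succ]
      push_cast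
      field_simp
      ring
    rw [h1, mul_comm (f m), mul_div_assoc, div_self (hfpos m).ne', mul_one]
  have g1 := tendsto_ratio A
  have g2 := tendsto_ratio B
  have g3 : Filter.Tendsto (fun m : ℕ => ((1:ℝ) + m) / (1/2 + m)) Filter.atTop (nhds 1) := by
    have := (tendsto_ratio (1/2)).inv₀ one_ne_zero
    rw [inv_one] at this
    refine this.congr (fun m => ?_)
    rw [inv_div]
  have gfinal := ((g1.const_mul t).mul g2).mul g3
  rw [mul_one, mul_one, mul_one] at gfinal
  refine Filter.Tendsto.congr (fun m => (key m).symm) gfinal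


/-- Corollary 2 (`β = 0`), even part: the unnormalized even posterior moment in closed form. -/
theorem posterior_moment_even_beta_zero (n : ℕ) (hn : 1 ≤ n) (α γ δ : ℝ) (hα : 0 < α)
    (hcond : γ + δ - 2 * α + 1 < (n : ℝ)) (r : ℝ) (hr : r ∈ Ioo (-1 : ℝ) 1)
    (k : ℕ) (hk : Even k) :
    (∫ ρ in Ioo (-1 : ℝ) 1,
        ρ ^ k * (1 - ρ ^ 2) ^ ((2 * α + (n : ℝ) - γ - δ - 3) / 2) *
          twoF1 (((n : ℝ) - γ - 1) / 2) (((n : ℝ) - δ - 1) / 2) (1 / 2) (r ^ 2 * ρ ^ 2)) =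
      betaFn (((k : ℝ) + 1) / 2) (α + ((n : ℝ) - γ - δ - 1) / 2) *
        threeF2 (((k : ℝ) + 1) / 2) (((n : ℝ) - γ - 1) / 2) (((n : ℝ) - δ - 1) / 2)
          (1 / 2) (((k : ℝ) + 2 * α + (n : ℝ) - γ - δ) / 2) (r ^ 2) := by
  obtain ⟨hr1, hr2⟩ := hr
  set a : ℝ := ((n:ℝ) - γ - 1) / 2 with ha
  set b : ℝ := ((n:ℝ) - δ - 1) / 2 with hb
  set p : ℝ := (2 * α + (n:ℝ) - γ - δ - 3) / 2 with hpdef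
  set s : ℝ := ((k:ℝ) + 1) / 2 with hsdef
  set q : ℝ := p + 1 with hqdef
  have hq0 : (0:ℝ) < q := by rw [hqdef, hpdef]; linarith
  have hp1 : (-1:ℝ) < p := by rw [hpdef]; linarith
  have hs0 : 0 < s := by rw [hsdef]; positivity
  have hr2lt : r ^ 2 < 1 := by nlinarith
  have hr2ge : (0:ℝ) ≤ r ^ 2 := sq_nonneg r
  set c : ℕ → ℝ := fun m => poch a m * poch b m / (poch (1/2 : ℝ) m * m.factorial) with hc
  set F : ℕ → ℝ → ℝ := fun m ρ => ρ ^ k * (1 - ρ ^ 2) ^ p * (c m * (r ^ 2 * ρ ^ 2) ^ m) with hF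
  have hpt : ∀ ρ : ℝ, ρ ^ k * (1 - ρ ^ 2) ^ p * twoF1 a b (1/2) (r ^ 2 * ρ ^ 2)
      = ∑' m : ℕ, F m ρ := by
    intro ρ
    rw [twoF1, ← tsum_mul_left]
  have hFeq : ∀ (m : ℕ) (ρ : ℝ),
      F m ρ = (c m * r ^ (2*m)) * (ρ ^ (k + 2*m) * (1 - ρ ^ 2) ^ p) := by
    intro m ρ
    simp only [hF, mul_pow, ← pow_mul, pow_add]
    ring
  have hkm : ∀ m : ℕ, Even (k + 2*m) := fun m => hk.add (even_two_mul m)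
  have hFint : ∀ m : ℕ, IntegrableOn (F m) (Ioo (-1:ℝ) 1) := by
    intro m
    have h : IntegrableOn (fun ρ : ℝ => (c m * r ^ (2*m)) * (ρ ^ (k + 2*m) * (1 - ρ ^ 2) ^ p))
        (Ioo (-1:ℝ) 1) := (moment_even_int (hkm m) hp1).const_mul (c m * r ^ (2*m))
    exact h.congr_fun (fun ρ _ => (hFeq m ρ).symm) measurableSet_Ioo
  have hsm : ∀ m : ℕ, (((k + 2*m : ℕ) : ℝ) + 1) / 2 = s + m := by
    intro m
    rw [hsdef]
    push_cast
    ring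
  have hIval : ∀ m : ℕ, (∫ ρ in Ioo (-1:ℝ) 1, F m ρ)
      = c m * r ^ (2*m) * betaFn (s + m) q := by
    intro m
    rw [setIntegral_congr_fun measurableSet_Ioo (fun ρ _ => hFeq m ρ),
      MeasureTheory.integral_const_mul, moment_even_val (hkm m) hp1, hsm m, ← hqdef]
  have hnorm : ∀ m : ℕ, (∫ ρ in Ioo (-1:ℝ) 1, ‖F m ρ‖)
      = |c m| * r ^ (2*m) * betaFn (s + m) q := by
    intro m
    have h1 : EqOn (fun ρ => ‖F m ρ‖)
        (fun ρ : ℝ => (|c m| * r ^ (2*m)) * (ρ ^ (k + 2*m) * (1 - ρ ^ 2) ^ p))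
        (Ioo (-1:ℝ) 1) := by
      intro ρ hρ
      have h2 : (0:ℝ) ≤ ρ ^ (k + 2*m) := (hkm m).pow_nonneg ρ
      have h3 : (0:ℝ) ≤ (1 - ρ ^ 2) ^ p :=
        Real.rpow_nonneg (by nlinarith [hρ.1, hρ.2] : (0:ℝ) ≤ 1 - ρ ^ 2) p
      have h4 : (0:ℝ) ≤ r ^ (2*m) := by rw [pow_mul]; positivity
      show ‖F m ρ‖ = _
      rw [hFeq m ρ, Real.norm_eq_abs, abs_mul, abs_mul, abs_of_nonneg h4,
        abs_of_nonneg (mul_nonneg h2 h3)]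
    rw [setIntegral_congr_fun measurableSet_Ioo h1, MeasureTheory.integral_const_mul,
      moment_even_val (hkm m) hp1, hsm m, ← hqdef]
  -- summability of norm integrals
  have hA0 : (0:ℝ) < |a| + 1 := by positivity
  have hB0 : (0:ℝ) < |b| + 1 := by positivity
  have hd := summable_hyp hA0 hB0 hr2ge hr2lt
  have hbound : ∀ m : ℕ, |c m| * r ^ (2*m) * betaFn (s + m) q
      ≤ betaFn s q * (poch (|a| + 1) m * poch (|b| + 1) m /
          (poch (1/2 : ℝ) m * m.factorial) * (r ^ 2) ^ m) := by
    intro m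
    have hden : (0:ℝ) < poch (1/2 : ℝ) m * m.factorial := by
      have := poch_pos (by norm_num : (0:ℝ) < 1/2) m
      have : (0:ℝ) < (m.factorial : ℝ) := by positivity
      positivity
    have hcabs : |c m| ≤ poch (|a| + 1) m * poch (|b| + 1) m /
        (poch (1/2 : ℝ) m * m.factorial) := by
      rw [hc]
      show |poch a m * poch b m / (poch (1/2 : ℝ) m * m.factorial)| ≤ _
      rw [abs_div, abs_of_pos hden, abs_mul]
      have e1 : |poch a m| ≤ poch (|a| + 1) m :=
        abs_poch_le (by linarith [abs_nonneg a]) m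
      have e2 : |poch b m| ≤ poch (|b| + 1) m :=
        abs_poch_le (by linarith [abs_nonneg b]) m
      have e3 := mul_le_mul e1 e2 (abs_nonneg _) (poch_nonneg hA0.le m)
      exact div_le_div_of_nonneg_right e3 hden.le
    have hbb : betaFn (s + m) q ≤ betaFn s q := by
      rw [betaFn_add_nat hs0 hq0 m]
      have h1 := poch_pos (by linarith : (0:ℝ) < s + q) m
      have h2 : poch s m ≤ poch (s + q) m := poch_le_poch hs0.le (by linarith) m
      rw [mul_div_assoc]
      calc betaFn s q * (poch s m / poch (s + q) m) ≤ betaFn s q * 1 :=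
        mul_le_mul_of_nonneg_left ((div_le_one h1).mpr h2) (betaFn_pos hs0 hq0).le
      _ = betaFn s q := mul_one _
    have h5 : (0:ℝ) ≤ (r ^ 2) ^ m := pow_nonneg hr2ge m
    have hsm0 : (0:ℝ) < s + m := by
      have : (0:ℝ) ≤ (m:ℝ) := Nat.cast_nonneg m
      linarith
    have h6 : (0:ℝ) ≤ betaFn (s + m) q := (betaFn_pos hsm0 hq0).le
    have h7 : (0:ℝ) ≤ poch (|a| + 1) m * poch (|b| + 1) m /
        (poch (1/2 : ℝ) m * m.factorial) :=
      div_nonneg (mul_nonneg (poch_pos hA0 m).le (poch_pos hB0 m).le) hden.le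
    rw [pow_mul]
    calc |c m| * (r ^ 2) ^ m * betaFn (s + m) q
        ≤ (poch (|a| + 1) m * poch (|b| + 1) m /
            (poch (1/2 : ℝ) m * m.factorial) * (r ^ 2) ^ m) * betaFn s q :=
          mul_le_mul (mul_le_mul hcabs le_rfl h5 h7) hbb h6 (mul_nonneg h7 h5)
      _ = betaFn s q * (poch (|a| + 1) m * poch (|b| + 1) m /
            (poch (1/2 : ℝ) m * m.factorial) * (r ^ 2) ^ m) := by ring
  have hsum : Summable (fun m : ℕ => ∫ ρ in Ioo (-1:ℝ) 1, ‖F m ρ‖) := by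
    refine Summable.of_nonneg_of_le
      (fun m => integral_nonneg fun ρ => norm_nonneg _) (fun m => ?_)
      (hd.mul_left (betaFn s q))
    rw [hnorm m]
    exact hbound m
  have hswap := MeasureTheory.integral_tsum_of_summable_integral_norm
    (μ := volume.restrict (Ioo (-1:ℝ) 1)) hFint hsum
  have hterm : ∀ m : ℕ, (c m * r ^ (2*m) * betaFn (s + m) q)
      = betaFn s q * (poch s m * poch a m * poch b m /
          (poch (1/2:ℝ) m * poch (s + q) m * (m.factorial : ℝ)) * (r ^ 2) ^ m) := by
    intro m
    rw [betaFn_add_nat hs0 hq0 m, pow_mul, hc]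
    have h1 := (poch_pos (by norm_num : (0:ℝ) < 1/2) m).ne'
    have h2 : ((m.factorial:ℝ)) ≠ 0 := by positivity
    have h3 := (poch_pos (by linarith : (0:ℝ) < s + q) m).ne'
    field_simp
  have hgoalL : (∫ ρ in Ioo (-1:ℝ) 1,
      ρ ^ k * (1 - ρ ^ 2) ^ p * twoF1 a b (1/2) (r ^ 2 * ρ ^ 2))
      = ∑' m : ℕ, ∫ ρ in Ioo (-1:ℝ) 1, F m ρ := by
    rw [setIntegral_congr_fun measurableSet_Ioo (fun ρ _ => hpt ρ)]
    exact hswap.symm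
  have hq2 : α + ((n:ℝ) - γ - δ - 1) / 2 = q := by rw [hqdef, hpdef]; ring
  have hsq2 : ((k:ℝ) + 2 * α + (n:ℝ) - γ - δ) / 2 = s + q := by
    rw [hqdef, hpdef, hsdef]; ring
  rw [hgoalL, hq2, hsq2, threeF2, ← tsum_mul_left]
  exact tsum_congr fun m => by rw [hIval m]; exact hterm m
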